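/- Let Ω be a compact Riemannian manifold with boundary, ḡ and g = ḡ + h metrics inducing the same metric on ∂Ω, with unit normals ν̄ (for ḡ) and ν (for g), and mean curvatures H_ḡ, H_g. Then 2(H_g · g(ν,ν̄) - H_ḡ · g(ν̄,ν̄)) = -Σ_{a=1}^{n-1} (2 (D̄_{e_a} h)(e_a, ν̄) - (D̄_{ν̄} h)(e_a, e_a)), where {e_a} is a local orthonormal frame on ∂Ω and D̄ is the ḡ-Levi-Civita connection. -/

import Mathlib

/-!
Pair `H_g ν - H_ḡ ν̄ = -Σ_a Γ(e_a, e_a)` with `ν̄` under the bilinear form `g = ḡ + h`; the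
Koszul-type formula for `Γ` turns each `2 g(Γ(e_a, e_a), ν̄)` into
`2 (D̄_{e_a} h)(e_a, ν̄) - (D̄_{ν̄} h)(e_a, e_a)`.
-/

open scoped RealInnerProductSpace

section

variable {V ι : Type*} [AddCommGroup V] [Module ℝ V] [Fintype ι]

theorem two_mul_apply_connectionDifference_diag (B : V →ₗ[ℝ] V →ₗ[ℝ] ℝ)
    (Dh : V → V → V → ℝ) (Γ : V → V → V)
    (hΓ : ∀ X Y Z, B (Γ X Y) Z = (1 / 2) * (Dh X Y Z + Dh Y X Z - Dh Z X Y)) (X Z : V) :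
    2 * B (Γ X X) Z = 2 * Dh X X Z - Dh Z X X := by
  rw [hΓ]
  ring

theorem two_mul_apply_meanCurvature_sub (B : V →ₗ[ℝ] V →ₗ[ℝ] ℝ)
    (Dh : V → V → V → ℝ) (Γ : V → V → V)
    (hΓ : ∀ X Y Z, B (Γ X Y) Z = (1 / 2) * (Dh X Y Z + Dh Y X Z - Dh Z X Y))
    (e : ι → V) (ν νb : V) (Hg Hgbar : ℝ)
    (hmc : Hg • ν - Hgbar • νb = -∑ a, Γ (e a) (e a)) :
    2 * (Hg * B ν νb - Hgbar * B νb νb) =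
      -∑ a, (2 * Dh (e a) (e a) νb - Dh νb (e a) (e a)) := calc
  2 * (Hg * B ν νb - Hgbar * B νb νb) = 2 * B (Hg • ν - Hgbar • νb) νb := by
    simp only [map_sub, map_smul, LinearMap.sub_apply, LinearMap.smul_apply, smul_eq_mul]
  _ = -∑ a, 2 * B (Γ (e a) (e a)) νb := by
    rw [hmc, map_neg, map_sum, LinearMap.neg_apply, LinearMap.sum_apply, mul_neg, Finset.mul_sum]
  _ = -∑ a, (2 * Dh (e a) (e a) νb - Dh νb (e a) (e a)) := by
    simp only [two_mul_apply_connectionDifference_diag B Dh Γ hΓ]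

end

theorem stmt4_general (n : ℕ)
    (V : Type) [NormedAddCommGroup V] [InnerProductSpace ℝ V]
    (e : Fin (n - 1) → V) (νb ν : V)
    (h : V →ₗ[ℝ] V →ₗ[ℝ] ℝ)
    (g : V → V → ℝ) (hg : ∀ x y, g x y = ⟪x, y⟫ + h x y)
    (Dh : V → V → V → ℝ)
    (Γ : V → V → V)
    (hΓ : ∀ X Y Z, g (Γ X Y) Z =
      (1 / 2) * (Dh X Y Z + Dh Y X Z - Dh Z X Y))
    (Hg Hgbar : ℝ)
    (hmc : Hg • ν - Hgbar • νb = -∑ a, Γ (e a) (e a)) :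
    2 * (Hg * g ν νb - Hgbar * g νb νb) =
      -∑ a, (2 * Dh (e a) (e a) νb - Dh νb (e a) (e a)) := by
  obtain rfl : g = fun x y => (innerₗ V + h) x y := by
    funext x y
    simp only [hg, LinearMap.add_apply, innerₗ_apply_apply]
  exact two_mul_apply_meanCurvature_sub _ Dh Γ hΓ e ν νb Hg Hgbar hmc

/-- Pointwise identity at a boundary point (V the ambient tangent space, ḡ the inner product,
`g = ḡ + h` inducing the same metric on `∂Ω`, `{e_a}` an orthonormal tangent frame, `νb`/`ν`
the unit outward normals, `Dh X Y Z = (D̄_X h)(Y,Z)`, and `Γ = D - D̄` the connection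
difference tensor): from `H_g ν - H_ḡ νb = -Σ_a Γ(e_a,e_a)` one gets
`2(H_g g(ν,νb) - H_ḡ g(νb,νb)) = -Σ_a (2(D̄_{e_a}h)(e_a,νb) - (D̄_{νb}h)(e_a,e_a))`. -/
theorem stmt4 (n : ℕ) (hn : 2 ≤ n)
    (V : Type) [NormedAddCommGroup V] [InnerProductSpace ℝ V] [FiniteDimensional ℝ V]
    (hdim : Module.finrank ℝ V = n)
    (e : Fin (n - 1) → V) (νb ν : V)
    (he : ∀ a b, ⟪e a, e b⟫ = if a = b then (1 : ℝ) else 0)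
    (hνb : ⟪νb, νb⟫ = (1 : ℝ)) (heνb : ∀ a, ⟪e a, νb⟫ = (0 : ℝ))
    (h : V →ₗ[ℝ] V →ₗ[ℝ] ℝ) (hsymm : ∀ x y, h x y = h y x)
    (htan : ∀ a b, h (e a) (e b) = 0)
    (g : V → V → ℝ) (hg : ∀ x y, g x y = ⟪x, y⟫ + h x y)
    (Dh : V → V → V → ℝ) (hDhsymm : ∀ X Y Z, Dh X Y Z = Dh X Z Y)
    (Γ : V → V → V)
    (hΓ : ∀ X Y Z, g (Γ X Y) Z =
      (1 / 2) * (Dh X Y Z + Dh Y X Z - Dh Z X Y))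
    (Hg Hgbar : ℝ)
    (hmc : Hg • ν - Hgbar • νb = -∑ a, Γ (e a) (e a)) :
    2 * (Hg * g ν νb - Hgbar * g νb νb) =
      -∑ a, (2 * Dh (e a) (e a) νb - Dh νb (e a) (e a)) :=
  stmt4_general n V e νb ν h g hg Dh Γ hΓ Hg Hgbar hmc
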